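/- For 1 < c₀ ≤ 2, K₀ = √((2−c₀)/c₀), β(t) = (c₀K₀/2)(2πt+k), the function x(t) = t + (1/π) arccot(K₀ tanh(β(t))) has x′(t) = (2/c₀)(sinh²β(t) − (c₀−c₀²)/2)/(cosh²β(t)(1+K₀²tanh²β(t))) > 0 for all t. -/

import Mathlib

open Real

noncomputable def arccot (y : ℝ) : ℝ := π / 2 - Real.arctan y

/-!
Differentiating, `x' = 1 - c₀ K₀² / D` with `D = cosh² β (1 + K₀² tanh² β) = cosh² β + K₀² sinh² β`.
Since `c₀ K₀² = 2 - c₀` and `cosh² = 1 + sinh²`, the numerator `D - c₀ K₀²` equals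
`(2 / c₀) (sinh² β - (c₀ - c₀²) / 2)`, which is positive because `c₀ > 1` makes `c₀ - c₀² < 0`.
-/

theorem Real.hasDerivAt_tanh (x : ℝ) : HasDerivAt tanh (1 / cosh x ^ 2) x := by
  have h := (hasDerivAt_sinh x).div (hasDerivAt_cosh x) (cosh_pos x).ne'
  rw [show tanh = fun y => sinh y / cosh y from funext tanh_eq_sinh_div_cosh]
  refine h.congr_deriv ?_
  rw [← cosh_sq_sub_sinh_sq x]
  ring

theorem hasDerivAt_arccot (y : ℝ) : HasDerivAt arccot (-(1 / (1 + y ^ 2))) y :=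
  (hasDerivAt_arctan y).const_sub (π / 2)

theorem cosh_sq_mul_one_add_mul_tanh_sq (K b : ℝ) :
    cosh b ^ 2 * (1 + K ^ 2 * tanh b ^ 2) = cosh b ^ 2 + K ^ 2 * sinh b ^ 2 := by
  rw [tanh_eq_sinh_div_cosh]
  field_simp [(cosh_pos b).ne']

theorem hasDerivAt_add_arccot_mul_tanh {β : ℝ → ℝ} {β' t : ℝ} (K : ℝ) (hβ : HasDerivAt β β' t) :
    HasDerivAt (fun s => s + (1 / π) * arccot (K * tanh (β s)))
      (1 - K * β' / (π * (cosh (β t) ^ 2 * (1 + K ^ 2 * tanh (β t) ^ 2)))) t := by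
  have h := (hasDerivAt_id t).add
    (((hasDerivAt_arccot _).comp t (((hasDerivAt_tanh (β t)).comp t hβ).const_mul K)).const_mul
      (1 / π))
  refine h.congr_deriv ?_
  simp only [Function.comp_apply]
  field_simp [(cosh_pos (β t)).ne', pi_ne_zero]
  ring

theorem one_sub_mul_sq_div_cosh_sq_mul_eq {c K : ℝ} (b : ℝ) (hc : c ≠ 0) (hK : K ^ 2 = (2 - c) / c) :
    1 - c * K ^ 2 / (cosh b ^ 2 * (1 + K ^ 2 * tanh b ^ 2)) =
      (2 / c) * (sinh b ^ 2 - (c - c ^ 2) / 2) / (cosh b ^ 2 * (1 + K ^ 2 * tanh b ^ 2)) := by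
  have hD : 0 < cosh b ^ 2 * (1 + K ^ 2 * tanh b ^ 2) := by positivity
  rw [one_sub_div hD.ne']
  congr 1
  rw [cosh_sq_mul_one_add_mul_tanh_sq, cosh_sq, hK]
  field_simp
  ring

theorem x_deriv_tanh_branch_positive (c₀ k : ℝ) (hc₀ : 1 < c₀) (hc₀' : c₀ ≤ 2)
    (K₀ : ℝ) (hK₀ : K₀ = Real.sqrt ((2 - c₀) / c₀))
    (β : ℝ → ℝ) (hβ : ∀ t, β t = (c₀ * K₀ / 2) * (2 * π * t + k))
    (x : ℝ → ℝ)
    (hx : ∀ t, x t = t + (1 / π) * arccot (K₀ * Real.tanh (β t))) :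
    ∀ t : ℝ,
      deriv x t =
        (2 / c₀) * (Real.sinh (β t) ^ 2 - (c₀ - c₀ ^ 2) / 2) /
          (Real.cosh (β t) ^ 2 * (1 + K₀ ^ 2 * Real.tanh (β t) ^ 2)) ∧
      deriv x t > 0 := by
  intro t
  have hK₀sq : K₀ ^ 2 = (2 - c₀) / c₀ := by
    rw [hK₀, sq_sqrt (div_nonneg (by linarith) (by linarith))]
  have hβ' : HasDerivAt β (c₀ * K₀ * π) t := by
    rw [funext hβ]
    refine ((((hasDerivAt_id t).const_mul (2 * π)).add_const k).const_mul _).congr_deriv (by ring)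
  have hx' : HasDerivAt x _ t := funext hx ▸ hasDerivAt_add_arccot_mul_tanh K₀ hβ'
  have hderiv : deriv x t =
      (2 / c₀) * (sinh (β t) ^ 2 - (c₀ - c₀ ^ 2) / 2) /
        (cosh (β t) ^ 2 * (1 + K₀ ^ 2 * tanh (β t) ^ 2)) := by
    rw [hx'.deriv, ← one_sub_mul_sq_div_cosh_sq_mul_eq (β t) (by positivity) hK₀sq]
    field_simp [pi_ne_zero]
  refine ⟨hderiv, hderiv ▸ ?_⟩
  have : 0 < sinh (β t) ^ 2 - (c₀ - c₀ ^ 2) / 2 := by nlinarith [sq_nonneg (sinh (β t))]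
  positivity
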